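/- Define the sequence of Ternary Tree matrices over 𝔽₂ = ZMod 2 by T⁽⁰⁾ := (1) (1 × 1) and, for k ≥ 0 with T⁽ᵏ⁾ of size n_k × n_k, let T⁽ᵏ⁺¹⁾ be the (3 n_k + 1) × (3 n_k + 1) block matrix with row-block heights (n_k, 1, n_k, n_k) and column-block widths (n_k, 1, n_k, n_k): [[T⁽ᵏ⁾, 0, 0, 0], [𝟙ᵀ, 1, 𝟙ᵀ, 0], [0, 0, (T⁽ᵏ⁾)^{⊤'}, 0], [0, 0, 0, T⁽ᵏ⁾]], where 𝟙ᵀ denotes an all-ones row vector of length n_k and (M^{⊤'})_{j,k} := M_{n−1−k, n−1−j} is the transpose of the n × n matrix M along the antidiagonal. Then T⁽ᵏ⁾ is invertible over 𝔽₂ for every k ≥ 0. -/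
import Mathlib


open Matrix

namespace FQ

/-- The sizes `n_k` of the Ternary Tree matrices: `n_0 = 1`, `n_{k+1} = 3 n_k + 1`
(so `n_k = (3^k + 1)/2`). -/
def ttSize : ℕ → ℕ
  | 0 => 1
  | k + 1 => 3 * ttSize k + 1

/-- The transpose of an `n × n` matrix along the antidiagonal:
`(M^{⊤'})_{j,k} = M_{n−1−k, n−1−j}`. -/
def antidiagTranspose {n : ℕ} (M : Matrix (Fin n) (Fin n) (ZMod 2)) :
    Matrix (Fin n) (Fin n) (ZMod 2) :=
  Matrix.of fun j k => M k.rev j.rev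

/-- The Ternary Tree matrices over `𝔽₂`: `T⁽⁰⁾ = (1)` and `T⁽ᵏ⁺¹⁾` is the
`(3 n_k + 1) × (3 n_k + 1)` block matrix
`[[T⁽ᵏ⁾, 0, 0, 0], [𝟙ᵀ, 1, 𝟙ᵀ, 0], [0, 0, (T⁽ᵏ⁾)^{⊤'}, 0], [0, 0, 0, T⁽ᵏ⁾]]`
with row-block heights and column-block widths `(n_k, 1, n_k, n_k)`. -/
def TT : (k : ℕ) → Matrix (Fin (ttSize k)) (Fin (ttSize k)) (ZMod 2)
  | 0 => 1
  | k + 1 =>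
    Matrix.of fun r c =>
      have hr3 : (r : ℕ) < 3 * ttSize k + 1 := by
        have := r.isLt; simpa [ttSize] using this
      have hc3 : (c : ℕ) < 3 * ttSize k + 1 := by
        have := c.isLt; simpa [ttSize] using this
      if hr : (r : ℕ) < ttSize k then
        -- first row block: [T, 0, 0, 0]
        if hc : (c : ℕ) < ttSize k then TT k ⟨r, hr⟩ ⟨c, hc⟩ else 0
      else if (r : ℕ) = ttSize k then
        -- second row block: [𝟙ᵀ, 1, 𝟙ᵀ, 0]
        if (c : ℕ) ≤ 2 * ttSize k then 1 else 0
      else if hr2 : (r : ℕ) ≤ 2 * ttSize k then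
        -- third row block: [0, 0, (T)^{⊤'}, 0]
        if hc2 : ttSize k < (c : ℕ) ∧ (c : ℕ) ≤ 2 * ttSize k then
          antidiagTranspose (TT k) ⟨(r : ℕ) - ttSize k - 1, by omega⟩
            ⟨(c : ℕ) - ttSize k - 1, by omega⟩
        else 0
      else
        -- fourth row block: [0, 0, 0, T]
        if hc4 : 2 * ttSize k < (c : ℕ) then
          TT k ⟨(r : ℕ) - 2 * ttSize k - 1, by omega⟩ ⟨(c : ℕ) - 2 * ttSize k - 1, by omega⟩
        else 0

lemma det_antidiagTranspose {n} (M : Matrix (Fin n) (Fin n) (ZMod 2)) :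
    (antidiagTranspose M).det = M.det := by
  have h : antidiagTranspose M = (Mᵀ).submatrix (Fin.revPerm : Equiv.Perm (Fin n)) Fin.revPerm := by
    ext j k; rfl
  rw [h, Matrix.det_submatrix_equiv_self, Matrix.det_transpose]

/-- every Ternary Tree matrix `T⁽ᵏ⁾` is invertible over `𝔽₂`. -/
theorem ternary_tree_matrix_invertible : ∀ k : ℕ, IsUnit (TT k) := by
  intro k
  induction k with
  | zero => rw [TT]; exact isUnit_one
  | succ k ih =>
    rw [Matrix.isUnit_iff_isUnit_det] at ih ⊢
    have hsz : ttSize (k+1) = (ttSize k + 1) + (ttSize k + ttSize k) := by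
      simp [ttSize]; ring
    let e : (Fin (ttSize k) ⊕ Fin 1) ⊕ (Fin (ttSize k) ⊕ Fin (ttSize k)) ≃ Fin (ttSize (k+1)) :=
      ((Equiv.sumCongr finSumFinEquiv finSumFinEquiv).trans finSumFinEquiv).trans
        (finCongr hsz.symm)
    have he1 : ∀ i : Fin (ttSize k), ((e (.inl (.inl i)) : Fin (ttSize (k+1))) : ℕ) = i := by
      intro i; simp [e]
    have he2 : ∀ i : Fin 1, ((e (.inl (.inr i)) : Fin (ttSize (k+1))) : ℕ) = ttSize k := by
      intro i; simp [e, Fin.fin_one_eq_zero i]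
    have he3 : ∀ i : Fin (ttSize k),
        ((e (.inr (.inl i)) : Fin (ttSize (k+1))) : ℕ) = ttSize k + 1 + i := by
      intro i; simp [e]
    have he4 : ∀ i : Fin (ttSize k),
        ((e (.inr (.inr i)) : Fin (ttSize (k+1))) : ℕ) = 2 * ttSize k + 1 + i := by
      intro i; simp [e]; omega
    have key : (TT (k+1)).submatrix e e =
        Matrix.fromBlocks
          (Matrix.fromBlocks (TT k) 0 (Matrix.of fun _ _ => 1) 1)
          (Matrix.fromBlocks 0 0 (Matrix.of fun _ _ => 1) 0)
          0
          (Matrix.fromBlocks (antidiagTranspose (TT k)) 0 0 (TT k)) := by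
      ext i j
      rcases i with (i | i) | (i | i) <;> rcases j with (j | j) | (j | j) <;>
        rw [Matrix.submatrix_apply, TT] <;>
        simp only [Matrix.of_apply, Matrix.fromBlocks_apply₁₁, Matrix.fromBlocks_apply₁₂,
          Matrix.fromBlocks_apply₂₁, Matrix.fromBlocks_apply₂₂, Matrix.zero_apply,
          Matrix.one_apply, he1, he2, he3, he4] <;>
        (split_ifs <;>
          first
          | rfl
          | omega
          | exact congrArg₂ _ (Fin.ext (by simp only [Fin.val_mk]; omega))
              (Fin.ext (by simp only [Fin.val_mk]; omega)))
    have hdet : (TT (k+1)).det =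
        ((TT k).det * (1 : Matrix (Fin 1) (Fin 1) (ZMod 2)).det) * ((TT k).det * (TT k).det) := by
      rw [← Matrix.det_submatrix_equiv_self e, key, Matrix.det_fromBlocks_zero₂₁,
        Matrix.det_fromBlocks_zero₁₂, Matrix.det_fromBlocks_zero₁₂, det_antidiagTranspose]
    rw [hdet, Matrix.det_one]
    exact ((ih.mul isUnit_one).mul (ih.mul ih))

end FQ
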